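/- Let a and b be positive real numbers satisfying 2a⁵ + 3a⁴b + a³b² − 5a² − 5ab − b² = 0 and −a⁴b − a³b² + a²b³ − a² + ab⁴ − ab + b² = 0. Then b, viewed as a complex number, does not lie in solvableByRad ℚ ℂ; that is, the coordinates of the collinear Fruchterman–Reingold equilibrium of the path on four vertices cannot be expressed by nested radicals. -/

import Mathlib

/-!
Eliminating `a` from the two equilibrium equations leaves `b⁴` times a quintic in `b³`; after the
substitution `s = 3b³` this becomes the monic integer quintic
`X⁵ - 48X⁴ + 1008X³ - 10764X² + 38880X + 11664`, which has `s` as a root.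

The quintic is irreducible over `ℚ` because it is irreducible modulo `11`: there it has neither a
root nor a monic quadratic factor. It has at least two real roots (sign changes at `0`, `8`, `20`)
and at most three (its third derivative has none), so exactly two of its roots are nonreal, and
complex conjugation acts on its roots as a transposition. An irreducible polynomial of prime degree
whose Galois group contains a transposition has the full symmetric group `S₅` as Galois group,
which is not solvable. By Abel–Ruffini `s` is not a radical expression, hence neither is `b`.
-/

open Polynomial

namespace Polynomial

theorem Monic.irreducible_of_not_isRoot_of_not_quadratic_dvd {R : Type*} [CommRing R]
    [IsDomain R] {p : R[X]} (hp : p.Monic) (hdeg₀ : 0 < p.natDegree) (hdeg₅ : p.natDegree ≤ 5)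
    (hroot : ∀ x, ¬ p.IsRoot x) (hquad : ∀ u v, ¬ X ^ 2 + C u * X + C v ∣ p) :
    Irreducible p := by
  have hp1 : p ≠ 1 := by rintro rfl; simp at hdeg₀
  rw [hp.irreducible_iff_lt_natDegree_lt hp1]
  intro q hq hqdeg hdvd
  obtain hq₁ | hq₂ : q.natDegree = 1 ∨ q.natDegree = 2 := by
    rw [Finset.mem_Ioc] at hqdeg; omega
  · rw [hq.eq_X_add_C hq₁, ← sub_neg_eq_add, ← C_neg, dvd_iff_isRoot] at hdvd
    exact hroot _ hdvd
  · obtain ⟨u, v, rfl⟩ := isMonicOfDegree_two_iff.mp ⟨hq₂, hq⟩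
    exact hquad u v hdvd

theorem eq_zero_of_quadratic_dvd_linear {R : Type*} [CommRing R] [IsDomain R] {u v r s : R}
    (h : X ^ 2 + C u * X + C v ∣ C r * X + C s) : r = 0 ∧ s = 0 := by
  have h0 := eq_zero_of_dvd_of_natDegree_lt h <| by
    rw [(isMonicOfDegree_add_add_two u v).natDegree_eq]
    exact natDegree_linear_le.trans_lt one_lt_two
  exact ⟨by simpa using congrArg (coeff · 1) h0, by simpa using congrArg (coeff · 0) h0⟩

theorem card_rootSet_le_iterate_derivative {F : Type*} [CommRing F] [Algebra F ℝ]
    (p : F[X]) (n : ℕ) :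
    Fintype.card (p.rootSet ℝ) ≤ Fintype.card ((derivative^[n] p).rootSet ℝ) + n := by
  induction n with
  | zero => exact le_rfl
  | succ n ih =>
    rw [Function.iterate_succ_apply']
    have := card_rootSet_le_derivative (derivative^[n] p)
    omega

theorem two_le_card_rootSet_of_sign_changes {F : Type*} [CommRing F] [Algebra F ℝ]
    (p : F[X]) {x y z : ℝ} (hxy : x ≤ y) (hyz : y ≤ z) (hx : 0 < aeval x p)
    (hy : aeval y p < 0) (hz : 0 < aeval z p) : 2 ≤ Fintype.card (p.rootSet ℝ) := by
  have hp : p.map (algebraMap F ℝ) ≠ 0 := by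
    intro h0
    rw [← aeval_map_algebraMap ℝ, h0, map_zero] at hy
    exact hy.false
  obtain ⟨r, hr, hr0⟩ := intermediate_value_Ioo' hxy p.continuousOn_aeval ⟨hy, hx⟩
  obtain ⟨s, hs, hs0⟩ := intermediate_value_Ioo hyz p.continuousOn_aeval ⟨hy, hz⟩
  beta_reduce at hr0 hs0
  have hrs : r ≠ s := (hr.2.trans hs.1).ne
  have hsub : ({r, s} : Finset ℝ) ⊆ (p.rootSet ℝ).toFinset := by
    simp [Set.insert_subset_iff, mem_rootSet', hp, hr0, hs0]
  simpa [Finset.card_pair hrs] using Finset.card_le_card hsub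

end Polynomial

theorem notMem_solvableByRad_of_prime_degree {p : ℚ[X]} (hp : Irreducible p)
    (hprime : p.natDegree.Prime) (hdeg : 5 ≤ p.natDegree)
    (hreal₁ : Fintype.card (p.rootSet ℝ) + 1 ≤ p.natDegree)
    (hreal₂ : p.natDegree ≤ Fintype.card (p.rootSet ℝ) + 3) {x : ℂ} (hx : aeval x p = 0) :
    x ∉ solvableByRad ℚ ℂ := by
  have hcard : Fintype.card (p.rootSet ℂ) = p.natDegree :=
    card_rootSet_eq_natDegree hp.separable (IsAlgClosed.splits _)
  have hbij := Gal.galActionHom_bijective_of_prime_degree' hp hprime (hcard ▸ hreal₁)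
    (hcard ▸ hreal₂)
  intro hx_rad
  have := isSolvable_gal_of_irreducible hx_rad hp hx
  refine Equiv.Perm.not_isSolvable (p.rootSet ℂ) ?_ (Group.isSolvable_of_surjective hbij.2)
  rw [Cardinal.mk_fintype, hcard]
  exact_mod_cast hdeg

namespace FRPath

instance fact_prime_eleven : Fact (Nat.Prime 11) := ⟨by norm_num⟩

noncomputable def quintic : ℤ[X] :=
  X ^ 5 - 48 * X ^ 4 + 1008 * X ^ 3 - 10764 * X ^ 2 + 38880 * X + 11664

theorem monic_quintic : quintic.Monic := by unfold quintic; monicity!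

theorem natDegree_quintic : quintic.natDegree = 5 := by unfold quintic; compute_degree!

theorem map_quintic {R : Type*} [CommRing R] (f : ℤ →+* R) :
    quintic.map f = X ^ 5 - 48 * X ^ 4 + 1008 * X ^ 3 - 10764 * X ^ 2 + 38880 * X + 11664 := by
  simp [quintic]

theorem aeval_quintic {R : Type*} [CommRing R] (x : R) :
    aeval x quintic = x ^ 5 - 48 * x ^ 4 + 1008 * x ^ 3 - 10764 * x ^ 2 + 38880 * x + 11664 := by
  simp [quintic, map_ofNat]

theorem map_quintic_eq_mul_add {R : Type*} [CommRing R] (u v : R) :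
    quintic.map (Int.castRingHom R) =
      (X ^ 2 + C u * X + C v) *
        (X ^ 3 - C (u + 48) * X ^ 2 + C (u ^ 2 + 48 * u - v + 1008) * X
          - C (u ^ 3 + 48 * u ^ 2 - 2 * u * v + 1008 * u - 48 * v + 10764)) +
      (C (u ^ 4 + 48 * u ^ 3 - 3 * u ^ 2 * v + 1008 * u ^ 2 - 96 * u * v + 10764 * u + v ^ 2
          - 1008 * v + 38880) * X +
        C (u ^ 3 * v + 48 * u ^ 2 * v - 2 * u * v ^ 2 + 1008 * u * v - 48 * v ^ 2 + 10764 * v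
          + 11664)) := by
  rw [map_quintic]
  simp only [map_add, map_sub, map_mul, map_pow, map_ofNat]
  ring

theorem irreducible_map_quintic_zmod_eleven :
    Irreducible (quintic.map (Int.castRingHom (ZMod 11))) := by
  have hroot : ∀ x : ZMod 11,
      x ^ 5 - 48 * x ^ 4 + 1008 * x ^ 3 - 10764 * x ^ 2 + 38880 * x + 11664 ≠ 0 := by
    decide
  have hrem : ∀ u v : ZMod 11,
      ¬ (u ^ 4 + 48 * u ^ 3 - 3 * u ^ 2 * v + 1008 * u ^ 2 - 96 * u * v + 10764 * u + v ^ 2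
          - 1008 * v + 38880 = 0 ∧
        u ^ 3 * v + 48 * u ^ 2 * v - 2 * u * v ^ 2 + 1008 * u * v - 48 * v ^ 2 + 10764 * v
          + 11664 = 0) := by
    decide
  have hdeg : (quintic.map (Int.castRingHom (ZMod 11))).natDegree = 5 := by
    rw [monic_quintic.natDegree_map, natDegree_quintic]
  refine Monic.irreducible_of_not_isRoot_of_not_quadratic_dvd (monic_quintic.map _)
    (by rw [hdeg]; norm_num) hdeg.le (fun x ↦ by simpa [map_quintic] using hroot x) ?_
  intro u v hdvd
  rw [map_quintic_eq_mul_add u v, dvd_add_right (dvd_mul_right _ _)] at hdvd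
  exact hrem u v (eq_zero_of_quadratic_dvd_linear hdvd)

theorem irreducible_map_quintic_rat : Irreducible (quintic.map (algebraMap ℤ ℚ)) :=
  (IsPrimitive.Int.irreducible_iff_irreducible_map_cast monic_quintic.isPrimitive).mp <|
    monic_quintic.irreducible_of_irreducible_map _ _ irreducible_map_quintic_zmod_eleven

theorem iterate_derivative_three_quintic :
    derivative^[3] quintic = 60 * X ^ 2 - 1152 * X + 6048 := by
  simp only [quintic, Function.iterate_succ, Function.iterate_zero, Function.comp_apply, id_eq,
    derivative_add, derivative_sub, derivative_mul, derivative_X_pow, derivative_ofNat,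
    derivative_X, derivative_C]
  norm_num
  ring

theorem card_rootSet_quintic_le : Fintype.card (quintic.rootSet ℝ) ≤ 3 := by
  have hbound := quintic.card_rootSet_le_iterate_derivative 3
  have hnone : Fintype.card ((derivative^[3] quintic).rootSet ℝ) = 0 := by
    refine Fintype.card_eq_zero_iff.mpr ⟨fun ⟨x, hx⟩ ↦ ?_⟩
    rw [iterate_derivative_three_quintic, mem_rootSet'] at hx
    have hx0 := hx.2
    simp only [map_add, aeval_sub, map_mul, map_ofNat, map_pow, aeval_X] at hx0
    nlinarith [sq_nonneg (5 * x - 48)]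
  omega

theorem two_le_card_rootSet_quintic : 2 ≤ Fintype.card (quintic.rootSet ℝ) :=
  quintic.two_le_card_rootSet_of_sign_changes (x := 0) (y := 8) (z := 20) (by norm_num)
    (by norm_num) (by norm_num [aeval_quintic]) (by norm_num [aeval_quintic])
    (by norm_num [aeval_quintic])

theorem notMem_solvableByRad_of_aeval_quintic_eq_zero {x : ℂ} (hx : aeval x quintic = 0) :
    x ∉ solvableByRad ℚ ℂ := by
  have hdeg : (quintic.map (algebraMap ℤ ℚ)).natDegree = 5 := by
    rw [monic_quintic.natDegree_map, natDegree_quintic]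
  have hreal : Fintype.card ((quintic.map (algebraMap ℤ ℚ)).rootSet ℝ) =
      Fintype.card (quintic.rootSet ℝ) := by
    simp only [rootSet_def, aroots_map]
  refine notMem_solvableByRad_of_prime_degree irreducible_map_quintic_rat (hdeg ▸ Nat.prime_five)
    hdeg.ge ?_ ?_ (by rwa [aeval_map_algebraMap])
  · have := card_rootSet_quintic_le; omega
  · have := two_le_card_rootSet_quintic; omega

theorem aeval_three_mul_cube_quintic_eq_zero {R : Type*} [CommRing R] [IsDomain R] {a b : R}
    (hb : b ≠ 0)
    (h1 : 2 * a ^ 5 + 3 * a ^ 4 * b + a ^ 3 * b ^ 2 - 5 * a ^ 2 - 5 * a * b - b ^ 2 = 0)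
    (h2 : -a ^ 4 * b - a ^ 3 * b ^ 2 + a ^ 2 * b ^ 3 - a ^ 2 + a * b ^ 4 - a * b + b ^ 2 = 0) :
    aeval (3 * b ^ 3) quintic = 0 := by
  -- The multipliers are Bézout cofactors for the resultant of `h1` and `h2` with respect to `a`.
  have hres : b ^ 4 * (3 * b ^ 15 - 48 * b ^ 12 + 336 * b ^ 9 - 1196 * b ^ 6
      + 1440 * b ^ 3 + 144) = 0 := by
    linear_combination
      (-(24 * b ^ 2 + 212 * b ^ 5 - 432 * b ^ 8 + 190 * b ^ 11 - 27 * b ^ 14 + 3 * b ^ 17)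
        - (16 * b ^ 4 + 88 * b ^ 7 - 52 * b ^ 10 - 8 * b ^ 13 + 6 * b ^ 16) * a
        - (24 * b ^ 3 + 212 * b ^ 6 - 104 * b ^ 9 + 14 * b ^ 12 - 3 * b ^ 15) * a ^ 2
        - (16 * b ^ 5 - 8 * b ^ 8 + 16 * b ^ 11 - 6 * b ^ 14) * a ^ 3) * h1 +
      (-(-120 * b ^ 2 - 1228 * b ^ 5 + 764 * b ^ 8 - 146 * b ^ 11 + 21 * b ^ 14)
        - (-32 * b ^ 4 - 80 * b ^ 7 - 12 * b ^ 10 + 24 * b ^ 13) * a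
        - (24 * b ^ 3 + 436 * b ^ 6 - 256 * b ^ 9 + 42 * b ^ 12 - 3 * b ^ 15) * a ^ 2
        - (48 * b ^ 2 + 440 * b ^ 5 - 216 * b ^ 8 + 44 * b ^ 11 - 12 * b ^ 14) * a ^ 3
        - (32 * b ^ 4 - 16 * b ^ 7 + 32 * b ^ 10 - 12 * b ^ 13) * a ^ 4) * h2
  rw [aeval_quintic]
  linear_combination 81 * (mul_eq_zero.mp hres).resolve_left (pow_ne_zero 4 hb)

end FRPath

open FRPath in
theorem fr_path_equilibrium_not_solvableByRad_general (a b : ℝ) (hb : 0 < b)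
    (h1 : 2 * a ^ 5 + 3 * a ^ 4 * b + a ^ 3 * b ^ 2 - 5 * a ^ 2 - 5 * a * b - b ^ 2 = 0)
    (h2 : -a ^ 4 * b - a ^ 3 * b ^ 2 + a ^ 2 * b ^ 3 - a ^ 2 + a * b ^ 4 - a * b + b ^ 2 = 0) :
    (b : ℂ) ∉ solvableByRad ℚ ℂ := by
  intro hb_rad
  have hroot : aeval (3 * (b : ℂ) ^ 3) quintic = 0 :=
    aeval_three_mul_cube_quintic_eq_zero (a := (a : ℂ)) (by exact_mod_cast hb.ne')
      (by exact_mod_cast h1) (by exact_mod_cast h2)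
  exact notMem_solvableByRad_of_aeval_quintic_eq_zero hroot
    (mul_mem (by simp) (pow_mem hb_rad 3))

/-- If positive reals `a`, `b` satisfy the two Fruchterman–Reingold equilibrium equations
for the collinear drawing of the path on four vertices, then `b` (as a complex number) is
not expressible by nested radicals over `ℚ`. -/
theorem fr_path_equilibrium_not_solvableByRad (a b : ℝ) (ha : 0 < a) (hb : 0 < b)
    (h1 : 2 * a ^ 5 + 3 * a ^ 4 * b + a ^ 3 * b ^ 2 - 5 * a ^ 2 - 5 * a * b - b ^ 2 = 0)
    (h2 : -a ^ 4 * b - a ^ 3 * b ^ 2 + a ^ 2 * b ^ 3 - a ^ 2 + a * b ^ 4 - a * b + b ^ 2 = 0) :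
    (b : ℂ) ∉ solvableByRad ℚ ℂ :=
  fr_path_equilibrium_not_solvableByRad_general a b hb h1 h2
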